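/- Let τ_M > 0, τ_T > 0, a_M, a_T ∈ ℝ, t₀ ≤ t_f, and let u_T : ℝ → ℝ be continuous with u_T(s) ≥ −a_T for all s ∈ [t₀, t_f]. If Z : ℝ → ℝ satisfies Z′(s) = −τ_M·Ψ((t_f−s)/τ_M)·(−a_M) + τ_T·Ψ((t_f−s)/τ_T)·u_T(s) on [t₀, t_f] (the pursuer applies the constant command u_M = −a_M), then the terminal ZEM satisfies Z(t_f) ≥ Z(t₀) + ∂Z*(t_f − t₀). -/

import Mathlib

/-- Ψ(θ) = exp(−θ) + θ − 1 -/
noncomputable def Psi (θ : ℝ) : ℝ := Real.exp (-θ) + θ - 1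

/-- Υ(θ) = θ²/2 − exp(−θ) − θ + 1 -/
noncomputable def Upsilon (θ : ℝ) : ℝ := θ ^ 2 / 2 - Real.exp (-θ) - θ + 1

/-- The singular-region boundary ∂Z*(s) = a_M·τ_M²·Υ(s/τ_M) − a_T·τ_T²·Υ(s/τ_T). -/
noncomputable def singBdry (aM aT τM τT s : ℝ) : ℝ :=
  aM * τM ^ 2 * Upsilon (s / τM) - aT * τT ^ 2 * Upsilon (s / τT)

/-!
Along the trajectory, `Z s + ∂Z*(t_f − s)` has derivative `τ_T Ψ((t_f − s)/τ_T) (u_T(s) + a_T)`: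
the pursuer's term cancels exactly because `d/dθ Υ = Ψ`, and what remains is nonnegative since
`Ψ ≥ 0` and `u_T ≥ −a_T`. So this quantity is nondecreasing on `[t₀, t_f]`, and comparing its
values at the endpoints (where `∂Z*(0) = 0`) gives the bound.
-/

open Set

lemma psi_nonneg (θ : ℝ) : 0 ≤ Psi θ := by
  have := Real.add_one_le_exp (-θ)
  unfold Psi
  linarith

lemma upsilon_zero : Upsilon 0 = 0 := by
  simp [Upsilon]

lemma singBdry_zero (aM aT τM τT : ℝ) : singBdry aM aT τM τT 0 = 0 := by
  simp [singBdry, upsilon_zero]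

lemma hasDerivAt_upsilon (θ : ℝ) : HasDerivAt Upsilon (Psi θ) θ := by
  have hsq : HasDerivAt (fun x : ℝ => x ^ 2 / 2) θ θ := by
    simpa using (hasDerivAt_pow 2 θ).div_const 2
  have hexp : HasDerivAt (fun x : ℝ => Real.exp (-x)) (-Real.exp (-θ)) θ := by
    simpa using (hasDerivAt_neg θ).exp
  exact (((hsq.sub hexp).sub (hasDerivAt_id θ)).add_const 1).congr_deriv (by rw [Psi]; ring)

/-- At `τ = 0` both sides vanish, since `x / 0 = 0` in Lean. -/
lemma hasDerivAt_mul_sq_mul_upsilon_sub_div (a τ c s : ℝ) :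
    HasDerivAt (fun s => a * τ ^ 2 * Upsilon ((c - s) / τ)) (-(a * τ * Psi ((c - s) / τ))) s := by
  have hinner : HasDerivAt (fun s : ℝ => (c - s) / τ) (-1 / τ) s := by
    simpa using ((hasDerivAt_id s).const_sub c).div_const τ
  refine (((hasDerivAt_upsilon _).comp s hinner).const_mul (a * τ ^ 2)).congr_deriv ?_
  have hτ : τ ^ 2 / τ = τ := by rw [sq, mul_self_div_self]
  linear_combination (-(a * Psi ((c - s) / τ))) * hτ

lemma hasDerivAt_singBdry_sub (aM aT τM τT c s : ℝ) :
    HasDerivAt (fun s => singBdry aM aT τM τT (c - s))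
      (-(aM * τM * Psi ((c - s) / τM)) + aT * τT * Psi ((c - s) / τT)) s :=
  ((hasDerivAt_mul_sq_mul_upsilon_sub_div aM τM c s).sub
    (hasDerivAt_mul_sq_mul_upsilon_sub_div aT τT c s)).congr_deriv (by ring)

lemma le_of_hasDerivAt_nonneg_Icc {f f' : ℝ → ℝ} {a b : ℝ} (hab : a ≤ b)
    (hf : ∀ x ∈ Icc a b, HasDerivAt f (f' x) x) (hf' : ∀ x ∈ Icc a b, 0 ≤ f' x) :
    f a ≤ f b := by
  have hmono : MonotoneOn f (Icc a b) :=
    monotoneOn_of_hasDerivWithinAt_nonneg (convex_Icc a b)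
      (fun x hx => (hf x hx).continuousAt.continuousWithinAt)
      (fun x hx => (hf x (interior_subset hx)).hasDerivWithinAt)
      (fun x hx => hf' x (interior_subset hx))
  exact hmono (left_mem_Icc.mpr hab) (right_mem_Icc.mpr hab) hab

theorem terminal_zem_lower_bound_min_pursuer_general
    (τM τT aM aT tf t₀ : ℝ) (hτT : 0 < τT) (ht : t₀ ≤ tf)
    (uT : ℝ → ℝ)
    (huT : ∀ s ∈ Set.Icc t₀ tf, -aT ≤ uT s)
    (Z : ℝ → ℝ)
    (hZ : ∀ s ∈ Set.Icc t₀ tf,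
      HasDerivAt Z (-τM * Psi ((tf - s) / τM) * (-aM) + τT * Psi ((tf - s) / τT) * uT s) s) :
    Z t₀ + singBdry aM aT τM τT (tf - t₀) ≤ Z tf := by
  have hderiv : ∀ s ∈ Icc t₀ tf, HasDerivAt (fun s => Z s + singBdry aM aT τM τT (tf - s))
      (τT * Psi ((tf - s) / τT) * (uT s + aT)) s := by
    intro s hs
    exact ((hZ s hs).add (hasDerivAt_singBdry_sub aM aT τM τT tf s)).congr_deriv (by ring)
  have hderiv_nonneg : ∀ s ∈ Icc t₀ tf, 0 ≤ τT * Psi ((tf - s) / τT) * (uT s + aT) :=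
    fun s hs => mul_nonneg (mul_nonneg hτT.le (psi_nonneg _)) (by linarith [huT s hs])
  simpa only [sub_self, singBdry_zero, add_zero] using le_of_hasDerivAt_nonneg_Icc ht hderiv hderiv_nonneg

/-- If the pursuer applies the constant command u_M = −a_M while the target applies any
continuous command u_T with u_T(s) ≥ −a_T, then the terminal ZEM satisfies
Z(t_f) ≥ Z(t₀) + ∂Z*(t_f − t₀). -/
theorem terminal_zem_lower_bound_min_pursuer
    (τM τT aM aT tf t₀ : ℝ) (hτM : 0 < τM) (hτT : 0 < τT) (ht : t₀ ≤ tf)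
    (uT : ℝ → ℝ) (huTc : ContinuousOn uT (Set.Icc t₀ tf))
    (huT : ∀ s ∈ Set.Icc t₀ tf, -aT ≤ uT s)
    (Z : ℝ → ℝ)
    (hZ : ∀ s ∈ Set.Icc t₀ tf,
      HasDerivAt Z (-τM * Psi ((tf - s) / τM) * (-aM) + τT * Psi ((tf - s) / τT) * uT s) s) :
    Z t₀ + singBdry aM aT τM τT (tf - t₀) ≤ Z tf :=
  terminal_zem_lower_bound_min_pursuer_general τM τT aM aT tf t₀ hτT ht uT huT Z hZ
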